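/- arXiv:2407.15174 — 2 statements merged into one kernel-verified Lean document; each statement's English description precedes it below -/
import Mathlib

section
/- Let L and M be positive integers with 2·M ≤ L, let x : ZMod L → ℂ, let w : ZMod L → ℂ be the rectangular window w(d) = 1 if min(d.val, L − d.val) < M and w(d) = 0 otherwise, and for i : ZMod L let s_i(n) = x(n) · w(i − n). Then for every integer δ with |δ| < M, applying the DFT to the segment s_i, multiplying the k-th coefficient by the phase factor exp(2πi · k · δ / L), applying the inverse DFT, and evaluating at the center index i yields the time-warped value: (1/L) · ∑_{k ∈ ZMod L} exp(2πi · k · δ / L) · (∑_{n ∈ ZMod L} s_i(n) · exp(−2πi · n · k / L)) · exp(2πi · k · i / L) = x(i + δ), where i + δ denotes addition of the image of δ in ZMod L. -/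
open Complex Finset

lemma zmod_sum_val {L : ℕ} [NeZero L] (g : ℕ → ℂ) :
    ∑ k : ZMod L, g k.val = ∑ j ∈ range L, g j := by
  refine Finset.sum_nbij' (fun k => k.val) (fun j => (j : ZMod L)) ?_ ?_ ?_ ?_ ?_ <;>
    simp +contextual [ZMod.val_lt, ZMod.val_cast_of_lt, ZMod.natCast_val, Nat.mod_eq_of_lt]

lemma sum_exp_ker (L : ℕ) [NeZero L] (t : ℤ) :
    ∑ j ∈ range L, Complex.exp (2 * Real.pi * Complex.I * t / L) ^ j
      = if (L:ℤ) ∣ t then (L:ℂ) else 0 := by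
  have hL : (L:ℂ) ≠ 0 := Nat.cast_ne_zero.2 (NeZero.ne L)
  set ζ := Complex.exp (2 * Real.pi * Complex.I * t / L) with hζ
  have hζL : ζ ^ L = 1 := by
    rw [← Complex.exp_nat_mul]
    have : (L:ℂ) * (2 * Real.pi * Complex.I * t / L) = t * (2 * Real.pi * Complex.I) := by
      field_simp
    rw [this, Complex.exp_int_mul_two_pi_mul_I]
  have hiff : ζ = 1 ↔ (L:ℤ) ∣ t := by
    rw [hζ, Complex.exp_eq_one_iff]
    constructor
    · rintro ⟨n, hn⟩
      refine ⟨n, ?_⟩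
      have hπ : (Real.pi : ℂ) ≠ 0 := by exact_mod_cast Real.pi_ne_zero
      field_simp at hn
      have : (t : ℂ) = n * L := by
        apply mul_left_cancel₀ (mul_ne_zero (mul_ne_zero two_ne_zero hπ) Complex.I_ne_zero)
        linear_combination (2 * (Real.pi:ℂ) * Complex.I) * hn
      exact_mod_cast this.trans (mul_comm _ _)
    · rintro ⟨n, rfl⟩
      exact ⟨n, by field_simp; norm_cast⟩
  by_cases h : (L:ℤ) ∣ t
  · simp [h, hiff.2 h]
  · rw [geom_sum_eq (fun h1 => h (hiff.1 h1)), hζL]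
    simp [h]

/-- Applying the DFT to the segment `s_i` of `x`, multiplying the `k`-th
coefficient by the phase factor `exp (2πi · k · δ / L)`, applying the inverse
DFT, and evaluating at the center index `i` yields the time-warped value
`x (i + δ)`, for any integer shift `δ` with `|δ| < M`. -/
theorem segment_phaseShift_center (L M : ℕ) [NeZero L] (hM : 0 < M) (hML : 2 * M ≤ L)
    (x : ZMod L → ℂ)
    (w : ZMod L → ℂ) (hw : ∀ d : ZMod L, w d = if min d.val (L - d.val) < M then 1 else 0)
    (s : ZMod L → ZMod L → ℂ) (hs : ∀ i n : ZMod L, s i n = x n * w (i - n)) :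
    ∀ (i : ZMod L) (δ : ℤ), |δ| < (M : ℤ) →
      (1 / (L : ℂ)) *
        ∑ k : ZMod L,
          Complex.exp (2 * Real.pi * Complex.I * k.val * δ / L) *
            (∑ n : ZMod L,
              s i n * Complex.exp (-(2 * Real.pi * Complex.I * n.val * k.val) / L)) *
            Complex.exp (2 * Real.pi * Complex.I * k.val * i.val / L) =
      x (i + (δ : ZMod L)) := by
  intro i δ hδ
  have hL : (L:ℂ) ≠ 0 := Nat.cast_ne_zero.2 (NeZero.ne L)
  set T : ZMod L → ℤ := fun n => δ + (i.val : ℤ) - (n.val : ℤ) with hT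
  have step1 : ∀ k : ZMod L,
      Complex.exp (2 * Real.pi * Complex.I * k.val * δ / L) *
        (∑ n : ZMod L,
          s i n * Complex.exp (-(2 * Real.pi * Complex.I * n.val * k.val) / L)) *
        Complex.exp (2 * Real.pi * Complex.I * k.val * i.val / L)
      = ∑ n : ZMod L, s i n *
          Complex.exp (2 * Real.pi * Complex.I * (T n) / L) ^ k.val := by
    intro k
    rw [Finset.mul_sum, Finset.sum_mul]
    refine Finset.sum_congr rfl fun n _ => ?_
    have : 2 * Real.pi * Complex.I * k.val * δ / L +
        -(2 * Real.pi * Complex.I * n.val * k.val) / L +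
        2 * Real.pi * Complex.I * k.val * i.val / L
        = (k.val : ℂ) * (2 * Real.pi * Complex.I * (T n) / L) := by
      rw [hT]; push_cast; ring
    rw [← Complex.exp_nat_mul, ← this, Complex.exp_add, Complex.exp_add]
    ring
  rw [Finset.sum_congr rfl fun k _ => step1 k, Finset.sum_comm]
  have step2 : ∀ n : ZMod L,
      ∑ k : ZMod L, s i n * Complex.exp (2 * Real.pi * Complex.I * (T n) / L) ^ k.val
      = s i n * (if (L:ℤ) ∣ T n then (L:ℂ) else 0) := by
    intro n
    rw [← Finset.mul_sum, zmod_sum_val (fun j => Complex.exp (2 * Real.pi * Complex.I * (T n) / L) ^ j),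
      sum_exp_ker]
  rw [Finset.sum_congr rfl fun n _ => step2 n]
  have hdvd : ∀ n : ZMod L, ((L:ℤ) ∣ T n) ↔ n = i + (δ : ZMod L) := by
    intro n
    rw [← ZMod.intCast_zmod_eq_zero_iff_dvd, hT]
    push_cast
    simp only [ZMod.natCast_val, ZMod.cast_id]
    constructor
    · intro h; linear_combination -h
    · intro h; rw [h]; ring
  have : ∀ n : ZMod L, s i n * (if (L:ℤ) ∣ T n then (L:ℂ) else 0)
      = if n = i + (δ : ZMod L) then s i n * L else 0 := by
    intro n; simp only [hdvd n]; by_cases h : n = i + (δ : ZMod L) <;> simp [h]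
  rw [Finset.sum_congr rfl fun n _ => this n, Finset.sum_ite_eq' Finset.univ _ (fun n => s i n * L)]
  simp only [Finset.mem_univ, if_true]
  rw [hs]
  have hwval : w (i - (i + (δ : ZMod L))) = 1 := by
    have heq : i - (i + (δ : ZMod L)) = ((-δ : ℤ) : ZMod L) := by push_cast; ring
    rw [heq, hw]
    have hval : ((((-δ : ℤ) : ZMod L)).val : ℤ) = (-δ) % L := ZMod.val_intCast _
    have habs : δ.natAbs < M := by
      have h' := hδ; rw [Int.abs_eq_natAbs] at h'; omega
    rcases le_or_gt δ 0 with h0 | h0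
    · have hmod : (-δ) % L = -δ := Int.emod_eq_of_lt (by omega) (by omega)
      have hv : (((-δ : ℤ) : ZMod L)).val = δ.natAbs := by omega
      rw [if_pos (by omega)]
    · have h1 : (-δ) % (L:ℤ) = ((L:ℤ) - δ) % L := by
        rw [show (L:ℤ)-δ = -δ + L*1 by ring, Int.add_mul_emod_self_left]
      have h2 : ((L:ℤ)-δ) % L = (L:ℤ)-δ := Int.emod_eq_of_lt (by omega) (by omega)
      have hv : (((-δ : ℤ) : ZMod L)).val = L - δ.natAbs := by omega
      rw [if_pos (by omega)]
  rw [hwval, mul_one]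
  field_simp
end

section
/- (Proposition 1.) Let L and M be positive integers with 2·M ≤ L, let x : ZMod L → ℂ, let w : ZMod L → ℂ be the rectangular window w(d) = 1 if min(d.val, L − d.val) < M and w(d) = 0 otherwise, and for i : ZMod L let s_i(n) = x(n) · w(i − n). Let Δ : ZMod L → ℤ be a warping path with |Δ(i)| < M for every i. Then the time-warped sequence i ↦ x(i + Δ(i)) is obtained segment-wise by phase shifts in the frequency domain: for every i : ZMod L, x(i + Δ(i)) = (1/L) · ∑_{k ∈ ZMod L} exp(2πi · k · Δ(i) / L) · (∑_{n ∈ ZMod L} s_i(n) · exp(−2πi · n · k / L)) · exp(2πi · k · i / L), where i + Δ(i) denotes addition of the image of Δ(i) in ZMod L. -/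
open Complex Finset

lemma sum_zmod_val {L : ℕ} [NeZero L] (f : ℕ → ℂ) :
    ∑ k : ZMod L, f k.val = ∑ j ∈ Finset.range L, f j := by
  obtain ⟨m, rfl⟩ := Nat.exists_eq_succ_of_ne_zero (NeZero.ne L)
  exact Fin.sum_univ_eq_sum_range (fun j => f j) (m + 1)

lemma sum_exp_aux (L : ℕ) [NeZero L] (m : ℤ) :
    ∑ k : ZMod L, Complex.exp (2 * Real.pi * Complex.I * k.val * m / L) =
      if (m : ZMod L) = 0 then (L : ℂ) else 0 := by
  have hL : (L : ℂ) ≠ 0 := Nat.cast_ne_zero.mpr (NeZero.ne L)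
  set ζ : ℂ := Complex.exp (2 * Real.pi * Complex.I * m / L) with hζ
  have hterm : ∀ k : ZMod L,
      Complex.exp (2 * Real.pi * Complex.I * k.val * m / L) = ζ ^ (k.val) := by
    intro k
    rw [hζ, ← Complex.exp_nat_mul]
    ring_nf
  rw [Finset.sum_congr rfl (fun k _ => hterm k), sum_zmod_val (fun j => ζ ^ j)]
  have hζL : ζ ^ L = 1 := by
    rw [hζ, ← Complex.exp_nat_mul]
    have : (L : ℂ) * (2 * Real.pi * Complex.I * m / L) = m * (2 * Real.pi * Complex.I) := by
      field_simp
    rw [this, Complex.exp_int_mul_two_pi_mul_I]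
  by_cases h : (m : ZMod L) = 0
  · obtain ⟨c, hc⟩ := (ZMod.intCast_zmod_eq_zero_iff_dvd m L).mp h
    have : ζ = 1 := by
      rw [hζ, hc]
      push_cast
      have : 2 * Real.pi * Complex.I * ((L : ℂ) * c) / L = c * (2 * Real.pi * Complex.I) := by
        field_simp
      rw [this, Complex.exp_int_mul_two_pi_mul_I]
    simp [this, h]
  · have hζ1 : ζ ≠ 1 := by
      intro h1
      apply h
      rw [hζ, Complex.exp_eq_one_iff] at h1
      obtain ⟨n, hn⟩ := h1
      have h2πI : (2 : ℂ) * Real.pi * Complex.I ≠ 0 := by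
        simp [Real.pi_ne_zero, Complex.I_ne_zero]
      have key : (2 * Real.pi * Complex.I) * ((m : ℂ) / L) =
          (2 * Real.pi * Complex.I) * n := by linear_combination hn
      have key2 : (m : ℂ) / L = n := mul_left_cancel₀ h2πI key
      have h2 : (m : ℂ) = n * L := (div_eq_iff hL).mp key2
      have h3 : m = n * L := by exact_mod_cast h2
      exact (ZMod.intCast_zmod_eq_zero_iff_dvd m L).mpr ⟨n, by linarith⟩
    rw [geom_sum_eq hζ1, hζL]
    simp [h]

/-- **Proposition 1.** Applying time warping to a sequence along a warping path
`Δ` (with `|Δ i| < M` for all `i`) is equivalent to applying phase shifts to the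
frequency components of the overlapped sub-sequences (segments) of that
sequence and extracting the center value of each inverse-transformed segment. -/
theorem timeWarping_eq_segmentwise_phaseShift (L M : ℕ) [NeZero L]
    (hM : 0 < M) (hML : 2 * M ≤ L)
    (x : ZMod L → ℂ)
    (w : ZMod L → ℂ) (hw : ∀ d : ZMod L, w d = if min d.val (L - d.val) < M then 1 else 0)
    (s : ZMod L → ZMod L → ℂ) (hs : ∀ i n : ZMod L, s i n = x n * w (i - n))
    (Δ : ZMod L → ℤ) (hΔ : ∀ i : ZMod L, |Δ i| < (M : ℤ)) :
    ∀ i : ZMod L,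
      x (i + (Δ i : ZMod L)) =
        (1 / (L : ℂ)) *
          ∑ k : ZMod L,
            Complex.exp (2 * Real.pi * Complex.I * k.val * Δ i / L) *
              (∑ n : ZMod L,
                s i n * Complex.exp (-(2 * Real.pi * Complex.I * n.val * k.val) / L)) *
              Complex.exp (2 * Real.pi * Complex.I * k.val * i.val / L) := by
  intro i
  have hL : (L : ℂ) ≠ 0 := Nat.cast_ne_zero.mpr (NeZero.ne L)
  have hLpos : 0 < L := Nat.pos_of_ne_zero (NeZero.ne L)
  set n0 : ZMod L := i + (Δ i : ZMod L) with hn0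
  -- Step 1: rewrite each k-term as a sum over n with combined exponent
  have h1 : ∀ k : ZMod L,
      Complex.exp (2 * Real.pi * Complex.I * k.val * Δ i / L) *
        (∑ n : ZMod L,
          s i n * Complex.exp (-(2 * Real.pi * Complex.I * n.val * k.val) / L)) *
        Complex.exp (2 * Real.pi * Complex.I * k.val * i.val / L) =
      ∑ n : ZMod L, s i n *
        Complex.exp (2 * Real.pi * Complex.I * k.val *
          ((Δ i + (i.val : ℤ) - (n.val : ℤ) : ℤ) : ℂ) / L) := by
    intro k
    rw [Finset.mul_sum, Finset.sum_mul]
    refine Finset.sum_congr rfl fun n _ => ?_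
    rw [show ∀ a b c d : ℂ, a * (b * c) * d = b * (c * (a * d)) by intros; ring,
      ← Complex.exp_add, ← Complex.exp_add]
    congr 1
    push_cast
    ring
  rw [Finset.sum_congr rfl fun k _ => h1 k, Finset.sum_comm]
  -- Step 2: evaluate the inner sums over k
  have h2 : ∀ n : ZMod L,
      (∑ k : ZMod L, s i n *
        Complex.exp (2 * Real.pi * Complex.I * k.val *
          ((Δ i + (i.val : ℤ) - (n.val : ℤ) : ℤ) : ℂ) / L)) =
      s i n * (if n = n0 then (L : ℂ) else 0) := by
    intro n
    rw [← Finset.mul_sum, sum_exp_aux L (Δ i + (i.val : ℤ) - (n.val : ℤ))]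
    congr 1
    have hiv : ((i.val : ℤ) : ZMod L) = i := by
      push_cast [ZMod.natCast_val, ZMod.cast_id]; rfl
    have hnv : ((n.val : ℤ) : ZMod L) = n := by
      push_cast [ZMod.natCast_val, ZMod.cast_id]; rfl
    have hcond : ((Δ i : ZMod L) + i - n = 0) ↔ n = n0 := by
      rw [hn0]
      constructor
      · intro h; linear_combination -h
      · intro h; linear_combination -h
    push_cast [hiv, hnv]
    simp [hcond]
  rw [Finset.sum_congr rfl fun n _ => h2 n]
  -- Step 3: only n = n0 survives
  have h3 : (∑ n : ZMod L, s i n * (if n = n0 then (L : ℂ) else 0)) = s i n0 * L := by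
    simp [mul_ite, mul_zero]
  rw [h3]
  -- Step 4: evaluate s i n0
  have hwin : w (i - n0) = 1 := by
    have hd : i - n0 = ((-Δ i : ℤ) : ZMod L) := by
      rw [hn0]; push_cast; ring
    rw [hd, hw]
    have habs := abs_lt.mp (hΔ i)
    have hval : ((((-Δ i : ℤ) : ZMod L)).val : ℤ) = (-Δ i) % L := ZMod.val_intCast _
    rcases le_or_gt (Δ i) 0 with h | h
    · have hmod : (-Δ i) % L = -Δ i := Int.emod_eq_of_lt (by omega) (by omega)
      rw [if_pos]
      omega
    · have hmod : (-Δ i) % L = (L : ℤ) - Δ i := by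
        rw [show -Δ i = ((L : ℤ) - Δ i) + (-1) * L by ring, Int.add_mul_emod_self_right]
        exact Int.emod_eq_of_lt (by omega) (by omega)
      rw [if_pos]
      omega
  rw [hs, hwin, mul_one]
  field_simp
end
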